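/- Let d be an odd positive integer, let γ = (γ_1,…,γ_d) and Γ = (Γ_1,…,Γ_d) be two left-handed Clifford families of size d acting on ℂ^n with n = 2^{(d−1)/2}, and let b_1,…,b_d be nonzero real numbers. Set M = Σ_{j=1}^d b_j · (γ_j ⊗ Γ_j), an n²×n² self-adjoint matrix, |b| = Σ_{j=1}^d |b_j| and sgn(b) = Π_{j=1}^d sgn(b_j). If either (sgn(b) = 1 and d ≡ 1 mod 4) or (sgn(b) = −1 and d ≡ 3 mod 4), then |b| is an eigenvalue of M whose eigenspace is one-dimensional, and −|b| is not an eigenvalue of M. In the remaining cases, −|b| is an eigenvalue of M whose eigenspace is one-dimensional, and |b| is not an eigenvalue of M. -/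

import Mathlib

/-!
The matrices `B j = γ j ⊗ₖ Γ j` are commuting self-adjoint involutions. With `s j = sign (b j)` we
have `M = ∑ j, |b j| • (s j • B j)`, and each `1 - s j • B j` is positive semidefinite, so
`M v = |b| v` forces every `s j • B j` to fix `v`. The `|b|`-eigenspace is therefore the range of
the projection `P = ∏ j, (1 + s j • B j) / 2`, and its dimension is `tr P`. Expanding the product,
anticommutation kills the trace of every proper nonempty product of the `γ j`, so only the empty
and the full product survive, and handedness evaluates the latter:
`tr P = (1 + sgn(b) (-1) ^ ((d - 1) / 2)) / 2`. The eigenvalue `-|b|` of `M` is the eigenvalue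
`|b|` for `-b`, whose sign is `-sgn(b)` because `d` is odd.
-/

open Matrix Kronecker

theorem List.prod_map_one_add {ι R : Type*} [Semiring R] (f : ι → R) (l : List ι) :
    (l.map fun j => 1 + f j).prod = (l.sublists'.map fun s => (s.map f).prod).sum := by
  induction l with
  | nil => simp
  | cons a l ih =>
    simp only [List.map_cons, List.prod_cons, ih, List.sublists'_cons, List.map_append,
      List.sum_append, List.map_map, Function.comp_def, List.sum_map_mul_left, one_add_mul]

theorem List.prod_map_smul {ι R A : Type*} [CommSemiring R] [Semiring A] [Algebra R A]
    (c : ι → R) (x : ι → A) (l : List ι) :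
    (l.map fun j => c j • x j).prod = (l.map c).prod • (l.map x).prod := by
  induction l with
  | nil => simp
  | cons a l ih => simp only [List.map_cons, List.prod_cons, ih, smul_mul_smul_comm]

theorem List.sum_map_sublists'_eq_add {α M : Type*} [AddCommMonoid M] {l : List α}
    (hl : l.Nodup) (hne : l ≠ []) {f : List α → M}
    (hf : ∀ s, s.Sublist l → s ≠ [] → s ≠ l → f s = 0) :
    (l.sublists'.map f).sum = f [] + f l := by
  classical
  rw [← List.sum_toFinset f (List.nodup_sublists'.mpr hl)]
  refine Finset.sum_eq_add_of_mem [] l (by simp) (by simp) hne.symm fun s hs hs' => ?_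
  exact hf s (List.mem_sublists'.mp (List.mem_toFinset.mp hs)) hs'.1 hs'.2

theorem IsIdempotentElem.list_prod {M : Type*} [Monoid M] {l : List M}
    (h : ∀ x ∈ l, IsIdempotentElem x) (hc : l.Pairwise Commute) : IsIdempotentElem l.prod := by
  induction l with
  | nil => exact IsIdempotentElem.one
  | cons a l ih =>
    rw [List.pairwise_cons] at hc
    rw [List.prod_cons]
    exact IsIdempotentElem.mul_of_commute (Commute.list_prod_right l a hc.1)
      (h a List.mem_cons_self) (ih (fun x hx => h x (by simp [hx])) hc.2)

theorem isIdempotentElem_half_one_add {R : Type*} [Ring R] [Algebra ℂ R] {x : R}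
    (hx : x * x = 1) : IsIdempotentElem ((2 : ℂ)⁻¹ • (1 + x)) := by
  have hsq : (1 + x) * (1 + x) = (2 : ℂ) • (1 + x) := by
    simp only [add_mul, mul_add, one_mul, mul_one, hx, two_smul]; abel
  rw [IsIdempotentElem, smul_mul_smul_comm, hsq, smul_smul]
  norm_num

theorem mul_half_one_add_self {R : Type*} [Ring R] [Algebra ℂ R] {x : R} (hx : x * x = 1) :
    x * ((2 : ℂ)⁻¹ • (1 + x)) = (2 : ℂ)⁻¹ • (1 + x) := by
  rw [mul_smul_comm, mul_add, mul_one, hx, add_comm]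

theorem Real.sign_mul_abs (r : ℝ) : Real.sign r * |r| = r := by
  rcases lt_trichotomy r 0 with hr | rfl | hr
  · rw [Real.sign_of_neg hr, abs_of_neg hr, neg_one_mul, neg_neg]
  · simp
  · rw [Real.sign_of_pos hr, abs_of_pos hr, one_mul]

theorem Real.sign_mul_self_of_ne_zero {r : ℝ} (hr : r ≠ 0) : Real.sign r * Real.sign r = 1 := by
  rcases Real.sign_apply_eq_of_ne_zero r hr with h | h <;> rw [h] <;> norm_num

theorem Real.prod_sign_eq_one_or_eq_neg_one {ι : Type*} {s : Finset ι} {b : ι → ℝ}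
    (hb : ∀ j ∈ s, b j ≠ 0) : ∏ j ∈ s, Real.sign (b j) = 1 ∨ ∏ j ∈ s, Real.sign (b j) = -1 := by
  refine Finset.prod_induction _ (fun x => x = 1 ∨ x = -1) ?_ (Or.inl rfl)
    fun j hj => (Real.sign_apply_eq_of_ne_zero _ (hb j hj)).symm
  rintro x y (rfl | rfl) (rfl | rfl) <;> norm_num

namespace Matrix

theorem trace_mul_eq_zero_of_anticommute {n R : Type*} [Fintype n] [CommRing R]
    [NoZeroDivisors R] [CharZero R] {X Y : Matrix n n R} (h : X * Y = -(Y * X)) :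
    (X * Y).trace = 0 := by
  refine self_eq_neg.mp ?_
  calc (X * Y).trace = (Y * X).trace := trace_mul_comm X Y
    _ = -(X * Y).trace := by rw [h, trace_neg, neg_neg]

theorem trace_eq_finrank_range_mulVecLin {N K : Type*} [Fintype N] [DecidableEq N]
    [Field K] {P : Matrix N N K} (hP : IsIdempotentElem P) :
    P.trace = Module.finrank K (LinearMap.range P.mulVecLin) := by
  rw [← trace_toLin'_eq]
  exact (LinearMap.IsIdempotentElem.isProj_range _ (hP.map toLinAlgEquiv')).trace

open scoped ComplexOrder in
theorem PosSemidef.mulVec_eq_zero_of_sum_mulVec_eq_zero {ι N : Type*} [Fintype N] {s : Finset ι}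
    {X : ι → Matrix N N ℂ} (hX : ∀ j ∈ s, (X j).PosSemidef) {v : N → ℂ}
    (hv : (∑ j ∈ s, X j) *ᵥ v = 0) {j : ι} (hj : j ∈ s) : X j *ᵥ v = 0 := by
  have hsum : ∑ j ∈ s, star v ⬝ᵥ (X j *ᵥ v) = 0 := by
    rw [← dotProduct_sum, ← sum_mulVec, hv, dotProduct_zero]
  have hnonneg : ∀ j ∈ s, 0 ≤ star v ⬝ᵥ (X j *ᵥ v) :=
    fun j hj => (hX j hj).dotProduct_mulVec_nonneg v
  exact ((hX j hj).dotProduct_mulVec_zero_iff v).mp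
    ((Finset.sum_eq_zero_iff_of_nonneg hnonneg).mp hsum j hj)

variable {ι N N' : Type*} [Fintype N] [DecidableEq N] [Fintype N'] [DecidableEq N']

theorem list_prod_map_kronecker {R : Type*} [CommSemiring R] (x : ι → Matrix N N R)
    (y : ι → Matrix N' N' R) (l : List ι) :
    (l.map fun j => x j ⊗ₖ y j).prod = (l.map x).prod ⊗ₖ (l.map y).prod := by
  induction l with
  | nil => simp
  | cons a l ih => simp only [List.map_cons, List.prod_cons, ih, mul_kronecker_mul]

theorem trace_list_prod_map_smul_kronecker (c : ι → ℂ) (x : ι → Matrix N N ℂ)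
    (y : ι → Matrix N' N' ℂ) (l : List ι) :
    ((l.map fun j => c j • (x j ⊗ₖ y j)).prod).trace =
      (l.map c).prod * (((l.map x).prod).trace * ((l.map y).prod).trace) := by
  rw [List.prod_map_smul c (fun j => x j ⊗ₖ y j), list_prod_map_kronecker, trace_smul,
    trace_kronecker, smul_eq_mul]

open scoped ComplexOrder in
theorem posSemidef_one_sub_of_mul_self_eq_one {A : Matrix N N ℂ} (hA : A.IsHermitian)
    (hsq : A * A = 1) : (1 - A).PosSemidef := by
  have h : 1 - A = (2 : ℂ)⁻¹ • ((1 - A)ᴴ * (1 - A)) := by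
    rw [conjTranspose_sub, conjTranspose_one, hA.eq, sub_mul, mul_sub, mul_sub, hsq, one_mul,
      mul_one, one_mul, show (1 : Matrix N N ℂ) - A - (A - 1) = (2 : ℂ) • (1 - A) by
        rw [two_smul]; abel, smul_smul, inv_mul_cancel₀ two_ne_zero, one_smul]
  rw [h]
  refine (posSemidef_conjTranspose_mul_self _).smul ?_
  rw [← Complex.ofReal_ofNat, ← Complex.ofReal_inv]
  exact Complex.zero_le_real.mpr (by norm_num)

end Matrix

def CliffordRelations {ι A : Type*} [DecidableEq ι] [Ring A] [Algebra ℂ A] (γ : ι → A) : Prop :=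
  ∀ i j, γ i * γ j + γ j * γ i = if i = j then (2 : ℂ) • (1 : A) else 0

namespace CliffordRelations

section Algebra

variable {ι A : Type*} [DecidableEq ι] [Ring A] [Algebra ℂ A] {γ : ι → A}

theorem mul_self (h : CliffordRelations γ) (i : ι) : γ i * γ i = 1 := by
  have hii := h i i
  rw [if_pos rfl, ← two_smul ℂ (γ i * γ i)] at hii
  exact smul_right_injective A two_ne_zero hii

theorem anticomm (h : CliffordRelations γ) {i j : ι} (hij : i ≠ j) :
    γ i * γ j = -(γ j * γ i) := by
  have hij' := h i j
  rw [if_neg hij] at hij'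
  exact eq_neg_of_add_eq_zero_left hij'

theorem mul_list_prod_map (h : CliffordRelations γ) {k : ι} {l : List ι} (hk : k ∉ l) :
    γ k * (l.map γ).prod = (-1) ^ l.length * ((l.map γ).prod * γ k) := by
  induction l with
  | nil => simp
  | cons a l ih =>
    rw [List.mem_cons, not_or] at hk
    simp only [List.map_cons, List.prod_cons, List.length_cons, pow_succ]
    rw [← mul_assoc, h.anticomm hk.1, neg_mul, mul_assoc, ih hk.2,
      ((Commute.neg_one_right _).pow_right _).left_comm]
    simp [mul_assoc]

end Algebra

section Matrix

variable {ι N N' : Type*} [DecidableEq ι] [Fintype N] [DecidableEq N] [Fintype N']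
  [DecidableEq N'] {γ : ι → Matrix N N ℂ} {Γ : ι → Matrix N' N' ℂ}

theorem trace_list_prod_map_eq_zero [Fintype ι] (h : CliffordRelations γ) {l : List ι}
    (hnd : l.Nodup) (hne : l ≠ []) (hlt : l.length < Fintype.card ι) :
    ((l.map γ).prod).trace = 0 := by
  rcases Nat.even_or_odd l.length with heven | hodd
  · obtain ⟨a, t, rfl⟩ := List.exists_cons_of_ne_nil hne
    have htodd : Odd t.length := by simpa [Nat.even_add_one] using heven
    rw [List.map_cons, List.prod_cons]
    apply trace_mul_eq_zero_of_anticommute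
    rw [h.mul_list_prod_map (List.nodup_cons.mp hnd).1, htodd.neg_one_pow, neg_one_mul]
  · obtain ⟨k, hk⟩ : ∃ k, k ∉ l := by
      by_contra! hall
      have := Finset.card_le_card fun x (_ : x ∈ Finset.univ) => List.mem_toFinset.mpr (hall x)
      rw [List.toFinset_card_of_nodup hnd, Finset.card_univ] at this
      omega
    have hcomm : γ k * (l.map γ).prod = -((l.map γ).prod * γ k) := by
      rw [h.mul_list_prod_map hk, hodd.neg_one_pow, neg_one_mul]
    rw [← mul_one (l.map γ).prod, ← h.mul_self k, ← mul_assoc]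
    apply trace_mul_eq_zero_of_anticommute
    rw [← mul_assoc, hcomm, neg_mul, neg_neg]

theorem kronecker_mul_self (hγ : CliffordRelations γ) (hΓ : CliffordRelations Γ) (j : ι) :
    (γ j ⊗ₖ Γ j) * (γ j ⊗ₖ Γ j) = 1 := by
  rw [← mul_kronecker_mul, hγ.mul_self, hΓ.mul_self, one_kronecker_one]

theorem commute_kronecker (hγ : CliffordRelations γ) (hΓ : CliffordRelations Γ) (i j : ι) :
    Commute (γ i ⊗ₖ Γ i) (γ j ⊗ₖ Γ j) := by
  rcases eq_or_ne i j with rfl | hij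
  · exact Commute.refl _
  rw [Commute, SemiconjBy, ← mul_kronecker_mul, ← mul_kronecker_mul, hγ.anticomm hij,
    hΓ.anticomm hij, ← neg_one_smul ℂ (γ j * γ i), ← neg_one_smul ℂ (Γ j * Γ i),
    smul_kronecker, kronecker_smul, smul_smul, neg_one_mul, neg_neg, one_smul]

end Matrix

end CliffordRelations

section CommonFixedProjection

variable {ι N : Type*} [Fintype N] [DecidableEq N]

noncomputable def commonFixedProjection (A : ι → Matrix N N ℂ) (l : List ι) : Matrix N N ℂ :=
  (l.map fun j => (2 : ℂ)⁻¹ • (1 + A j)).prod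

variable {A : ι → Matrix N N ℂ}

theorem isIdempotentElem_commonFixedProjection (hsq : ∀ j, A j * A j = 1)
    (hcomm : ∀ i j, Commute (A i) (A j)) (l : List ι) :
    IsIdempotentElem (commonFixedProjection A l) := by
  refine IsIdempotentElem.list_prod ?_ ?_
  · simp only [List.forall_mem_map]
    exact fun j _ => isIdempotentElem_half_one_add (hsq j)
  · refine List.Pairwise.map _ (fun i j _ => ?_) (List.pairwise_of_forall fun _ _ => trivial)
    exact ((Commute.one_left _).add_left ((Commute.one_right _).add_right (hcomm i j))).smul_left _
      |>.smul_right _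

theorem mul_commonFixedProjection (hsq : ∀ j, A j * A j = 1)
    (hcomm : ∀ i j, Commute (A i) (A j)) {k : ι} {l : List ι} (hk : k ∈ l) :
    A k * commonFixedProjection A l = commonFixedProjection A l := by
  induction l with
  | nil => simp at hk
  | cons a l ih =>
    simp only [commonFixedProjection, List.map_cons, List.prod_cons] at ih ⊢
    rcases List.mem_cons.mp hk with rfl | hkl
    · rw [← mul_assoc, mul_half_one_add_self (hsq k)]
    · have hc : Commute (A k) ((2 : ℂ)⁻¹ • (1 + A a)) :=
        ((Commute.one_right _).add_right (hcomm k a)).smul_right _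
      rw [← mul_assoc, hc.eq, mul_assoc, ih hkl]

theorem commonFixedProjection_mulVec_of_forall {l : List ι} {v : N → ℂ}
    (hv : ∀ j ∈ l, A j *ᵥ v = v) : commonFixedProjection A l *ᵥ v = v := by
  induction l with
  | nil => simp [commonFixedProjection]
  | cons a l ih =>
    simp only [commonFixedProjection, List.map_cons, List.prod_cons, List.forall_mem_cons]
      at ih hv ⊢
    rw [← mulVec_mulVec, ih hv.2, smul_mulVec, add_mulVec, one_mulVec, hv.1, ← two_smul ℂ v,
      smul_smul, inv_mul_cancel₀ two_ne_zero, one_smul]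

theorem mem_range_commonFixedProjection_iff (hsq : ∀ j, A j * A j = 1)
    (hcomm : ∀ i j, Commute (A i) (A j)) {l : List ι} {v : N → ℂ} :
    v ∈ LinearMap.range (commonFixedProjection A l).mulVecLin ↔ ∀ j ∈ l, A j *ᵥ v = v := by
  constructor
  · rintro ⟨u, rfl⟩ j hj
    rw [mulVecLin_apply, mulVec_mulVec, mul_commonFixedProjection hsq hcomm hj]
  · exact fun hv => ⟨v, commonFixedProjection_mulVec_of_forall hv⟩

theorem trace_commonFixedProjection (A : ι → Matrix N N ℂ) (l : List ι) :
    (commonFixedProjection A l).trace =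
      2⁻¹ ^ l.length * (l.sublists'.map fun s => ((s.map A).prod).trace).sum := by
  rw [commonFixedProjection, List.prod_map_smul (fun _ => (2 : ℂ)⁻¹) (fun j => 1 + A j),
    List.prod_map_one_add, trace_smul, trace_list_sum, List.map_map, List.map_const',
    List.prod_replicate, smul_eq_mul]
  rfl

end CommonFixedProjection

section Extremal

variable {ι N : Type*} [Fintype ι] [Fintype N] [DecidableEq N] {A : ι → Matrix N N ℂ}

open scoped ComplexOrder in
theorem sum_smul_mulVec_eq_iff_forall_mulVec_eq (hA : ∀ j, (A j).IsHermitian)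
    (hsq : ∀ j, A j * A j = 1) {w : ι → ℝ} (hw : ∀ j, 0 < w j) {v : N → ℂ} :
    (∑ j, (w j : ℂ) • A j) *ᵥ v = (∑ j, (w j : ℂ)) • v ↔ ∀ j, A j *ᵥ v = v := by
  have hdefect : (∑ j, (w j : ℂ) • (1 - A j)) *ᵥ v =
      (∑ j, (w j : ℂ)) • v - (∑ j, (w j : ℂ) • A j) *ᵥ v := by
    simp only [smul_sub, Finset.sum_sub_distrib, sub_mulVec, ← Finset.sum_smul, smul_mulVec,
      one_mulVec]
  constructor
  · intro hv j
    have hpsd : ∀ j ∈ Finset.univ, ((w j : ℂ) • (1 - A j)).PosSemidef := fun j _ =>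
      (posSemidef_one_sub_of_mul_self_eq_one (hA j) (hsq j)).smul
        (Complex.zero_le_real.mpr (hw j).le)
    have hj := PosSemidef.mulVec_eq_zero_of_sum_mulVec_eq_zero hpsd
      (by rw [hdefect, hv, sub_self]) (Finset.mem_univ j)
    rw [smul_mulVec, smul_eq_zero, sub_mulVec, one_mulVec, sub_eq_zero] at hj
    exact (hj.resolve_left (Complex.ofReal_ne_zero.mpr (hw j).ne')).symm
  · intro hv
    simp only [sum_mulVec, smul_mulVec, hv, Finset.sum_smul]

theorem finrank_ker_sum_smul_sub_eq_trace (hA : ∀ j, (A j).IsHermitian)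
    (hsq : ∀ j, A j * A j = 1) (hcomm : ∀ i j, Commute (A i) (A j)) {w : ι → ℝ}
    (hw : ∀ j, 0 < w j) {l : List ι} (hl : ∀ j, j ∈ l) :
    (Module.finrank ℂ (LinearMap.ker (∑ j, (w j : ℂ) • A j - (∑ j, (w j : ℂ)) • 1).mulVecLin) :
      ℂ) = (commonFixedProjection A l).trace := by
  have hker : LinearMap.ker (∑ j, (w j : ℂ) • A j - (∑ j, (w j : ℂ)) • 1).mulVecLin =
      LinearMap.range (commonFixedProjection A l).mulVecLin := by
    ext v
    rw [LinearMap.mem_ker, mulVecLin_apply, sub_mulVec, smul_mulVec, one_mulVec, sub_eq_zero,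
      sum_smul_mulVec_eq_iff_forall_mulVec_eq hA hsq hw,
      mem_range_commonFixedProjection_iff hsq hcomm]
    simp [hl]
  rw [hker, trace_eq_finrank_range_mulVecLin (isIdempotentElem_commonFixedProjection hsq hcomm l)]

end Extremal

theorem CliffordRelations.trace_commonFixedProjection_smul_kronecker {m n : ℕ} (hn : n = 2 ^ m)
    {γ Γ : Fin (2 * m + 1) → Matrix (Fin n) (Fin n) ℂ} (hγ : CliffordRelations γ)
    (hγhand : (List.ofFn γ).prod = Complex.I ^ m • 1)
    (hΓhand : (List.ofFn Γ).prod = Complex.I ^ m • 1) (c : Fin (2 * m + 1) → ℂ) :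
    (commonFixedProjection (fun j => c j • (γ j ⊗ₖ Γ j)) (List.finRange (2 * m + 1))).trace =
      (1 + (∏ j, c j) * (-1) ^ m) / 2 := by
  have hvanish : ∀ s, s.Sublist (List.finRange (2 * m + 1)) → s ≠ [] →
      s ≠ List.finRange (2 * m + 1) → ((s.map fun j => c j • (γ j ⊗ₖ Γ j)).prod).trace = 0 := by
    intro s hs hne hfull
    have hlt : s.length < Fintype.card (Fin (2 * m + 1)) := by
      simpa using lt_of_le_of_ne hs.length_le fun h => hfull (hs.eq_of_length h)
    rw [trace_list_prod_map_smul_kronecker,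
      hγ.trace_list_prod_map_eq_zero ((List.nodup_finRange _).sublist hs) hne hlt,
      zero_mul, mul_zero]
  rw [trace_commonFixedProjection, List.sum_map_sublists'_eq_add (List.nodup_finRange _)
    (by simp) hvanish, trace_list_prod_map_smul_kronecker c γ Γ (List.finRange _)]
  simp only [← List.ofFn_eq_map, List.prod_ofFn, hγhand, hΓhand, List.length_finRange,
    List.map_nil, List.prod_nil, trace_one, trace_smul, Fintype.card_prod, Fintype.card_fin,
    smul_eq_mul, hn]
  have hI : Complex.I ^ m * Complex.I ^ m = (-1) ^ m := by rw [← mul_pow, Complex.I_mul_I]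
  have h2 : (2 : ℂ)⁻¹ ^ (2 * m + 1) * (2 ^ m * 2 ^ m) = 2⁻¹ := by
    rw [← pow_add, ← two_mul, pow_succ, mul_right_comm, ← mul_pow, inv_mul_cancel₀ two_ne_zero,
      one_pow, one_mul]
  push_cast
  calc _ = (2⁻¹ ^ (2 * m + 1) * (2 ^ m * 2 ^ m)) *
        (1 + (∏ j, c j) * (Complex.I ^ m * Complex.I ^ m)) := by ring
    _ = _ := by rw [hI, h2]; ring

theorem finrank_ker_sum_smul_kronecker_sub_sum_abs {m n : ℕ} (hn : n = 2 ^ m)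
    {γ Γ : Fin (2 * m + 1) → Matrix (Fin n) (Fin n) ℂ} (hγsa : ∀ j, (γ j).IsHermitian)
    (hγ : CliffordRelations γ) (hγhand : (List.ofFn γ).prod = Complex.I ^ m • 1)
    (hΓsa : ∀ j, (Γ j).IsHermitian) (hΓ : CliffordRelations Γ)
    (hΓhand : (List.ofFn Γ).prod = Complex.I ^ m • 1) {b : Fin (2 * m + 1) → ℝ}
    (hb : ∀ j, b j ≠ 0) :
    (Module.finrank ℂ (LinearMap.ker (∑ j, (b j : ℂ) • (γ j ⊗ₖ Γ j) -
      ((∑ j, |b j| : ℝ) : ℂ) • 1).mulVecLin) : ℝ) =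
      (1 + (∏ j, Real.sign (b j)) * (-1) ^ m) / 2 := by
  set A : Fin (2 * m + 1) → Matrix _ _ ℂ := fun j => (Real.sign (b j) : ℂ) • (γ j ⊗ₖ Γ j)
  have hA : ∀ j, (A j).IsHermitian := fun j => by
    rw [IsHermitian, conjTranspose_smul, conjTranspose_kronecker, (hγsa j).eq, (hΓsa j).eq,
      Complex.star_def, Complex.conj_ofReal]
  have hsq : ∀ j, A j * A j = 1 := fun j => by
    rw [smul_mul_smul_comm, CliffordRelations.kronecker_mul_self hγ hΓ, ← Complex.ofReal_mul,
      Real.sign_mul_self_of_ne_zero (hb j), Complex.ofReal_one, one_smul]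
  have hcomm : ∀ i j, Commute (A i) (A j) := fun i j =>
    ((CliffordRelations.commute_kronecker hγ hΓ i j).smul_left _).smul_right _
  have hsum : ∑ j, (b j : ℂ) • (γ j ⊗ₖ Γ j) - ((∑ j, |b j| : ℝ) : ℂ) • 1 =
      ∑ j, ((|b j| : ℝ) : ℂ) • A j - (∑ j, ((|b j| : ℝ) : ℂ)) • 1 := by
    simp only [A, smul_smul, ← Complex.ofReal_mul, mul_comm |_|, Real.sign_mul_abs,
      Complex.ofReal_sum]
  have key := finrank_ker_sum_smul_sub_eq_trace hA hsq hcomm (fun j => abs_pos.mpr (hb j))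
    (List.mem_finRange (n := 2 * m + 1))
  rw [hγ.trace_commonFixedProjection_smul_kronecker hn hγhand hΓhand, ← hsum] at key
  exact_mod_cast key

theorem finrank_ker_sum_smul_kronecker_add_sum_abs {m n : ℕ} (hn : n = 2 ^ m)
    {γ Γ : Fin (2 * m + 1) → Matrix (Fin n) (Fin n) ℂ} (hγsa : ∀ j, (γ j).IsHermitian)
    (hγ : CliffordRelations γ) (hγhand : (List.ofFn γ).prod = Complex.I ^ m • 1)
    (hΓsa : ∀ j, (Γ j).IsHermitian) (hΓ : CliffordRelations Γ)
    (hΓhand : (List.ofFn Γ).prod = Complex.I ^ m • 1) {b : Fin (2 * m + 1) → ℝ}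
    (hb : ∀ j, b j ≠ 0) :
    (Module.finrank ℂ (LinearMap.ker (∑ j, (b j : ℂ) • (γ j ⊗ₖ Γ j) -
      (-((∑ j, |b j| : ℝ) : ℂ)) • 1).mulVecLin) : ℝ) =
      (1 - (∏ j, Real.sign (b j)) * (-1) ^ m) / 2 := by
  have hneg : ∑ j, ((-b j : ℝ) : ℂ) • (γ j ⊗ₖ Γ j) - ((∑ j, |-b j| : ℝ) : ℂ) • 1 =
      -(∑ j, (b j : ℂ) • (γ j ⊗ₖ Γ j) - (-((∑ j, |b j| : ℝ) : ℂ)) • 1) := by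
    simp only [abs_neg, Complex.ofReal_neg, neg_smul, Finset.sum_neg_distrib]
    abel
  have h := finrank_ker_sum_smul_kronecker_sub_sum_abs hn hγsa hγ hγhand hΓsa hΓ hΓhand
    (b := -b) fun j => neg_ne_zero.mpr (hb j)
  simp only [Pi.neg_apply, Real.sign_neg, Finset.prod_neg, Finset.card_univ, Fintype.card_fin,
    (odd_two_mul_add_one m).neg_one_pow] at h
  rw [← toLin'_apply', ← LinearMap.ker_neg, ← map_neg, ← hneg, toLin'_apply', h]
  ring

theorem mul_neg_one_pow_eq_one_iff {m : ℕ} {σ : ℝ} (hσ : σ = 1 ∨ σ = -1) :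
    ((σ = 1 ∧ (2 * m + 1) % 4 = 1) ∨ (σ = -1 ∧ (2 * m + 1) % 4 = 3)) ↔ σ * (-1) ^ m = 1 := by
  rcases Nat.even_or_odd m with hm | hm
  · have h4 : (2 * m + 1) % 4 = 1 := by obtain ⟨t, rfl⟩ := hm; omega
    rcases hσ with rfl | rfl <;> norm_num [hm.neg_one_pow, h4]
  · have h4 : (2 * m + 1) % 4 = 3 := by obtain ⟨t, rfl⟩ := hm; omega
    rcases hσ with rfl | rfl <;> norm_num [hm.neg_one_pow, h4]

/-- the extremal eigenvalue `±|b|` of `M = Σ b_j (γ_j ⊗ Γ_j)` is simple, and which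
sign occurs is determined by `sgn(b)` and `d mod 4`. -/
theorem weyl_extremal_eigenvalue
    (d : ℕ) (hd : Odd d) (n : ℕ) (hn : n = 2 ^ ((d - 1) / 2))
    (γ Γm : Fin d → Matrix (Fin n) (Fin n) ℂ)
    (hγsa : ∀ j, (γ j)ᴴ = γ j)
    (hγac : ∀ i j, γ i * γ j + γ j * γ i =
      if i = j then (2 : ℂ) • (1 : Matrix (Fin n) (Fin n) ℂ) else 0)
    (hγhand : (List.ofFn γ).prod = (Complex.I) ^ ((d - 1) / 2) • (1 : Matrix (Fin n) (Fin n) ℂ))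
    (hΓsa : ∀ j, (Γm j)ᴴ = Γm j)
    (hΓac : ∀ i j, Γm i * Γm j + Γm j * Γm i =
      if i = j then (2 : ℂ) • (1 : Matrix (Fin n) (Fin n) ℂ) else 0)
    (hΓhand : (List.ofFn Γm).prod = (Complex.I) ^ ((d - 1) / 2) • (1 : Matrix (Fin n) (Fin n) ℂ))
    (b : Fin d → ℝ) (hb : ∀ j, b j ≠ 0)
    (M : Matrix (Fin n × Fin n) (Fin n × Fin n) ℂ)
    (hM : M = ∑ j, (b j : ℂ) • Matrix.kroneckerMap (· * ·) (γ j) (Γm j))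
    (absB : ℝ) (habsB : absB = ∑ j, |b j|)
    (sgnB : ℝ) (hsgnB : sgnB = ∏ j, Real.sign (b j))
    (E : ℂ → Submodule ℂ (Fin n × Fin n → ℂ))
    (hE : ∀ c, E c = LinearMap.ker
      (Matrix.mulVecLin (M - c • (1 : Matrix (Fin n × Fin n) (Fin n × Fin n) ℂ)))) :
    (((sgnB = 1 ∧ d % 4 = 1) ∨ (sgnB = -1 ∧ d % 4 = 3)) →
        (Module.finrank ℂ ↥(E (absB : ℂ)) = 1 ∧ E (-(absB : ℂ)) = ⊥))
    ∧ (¬ ((sgnB = 1 ∧ d % 4 = 1) ∨ (sgnB = -1 ∧ d % 4 = 3)) →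
        (Module.finrank ℂ ↥(E (-(absB : ℂ))) = 1 ∧ E (absB : ℂ) = ⊥)) := by
  obtain ⟨m, rfl⟩ := hd
  rw [show (2 * m + 1 - 1) / 2 = m by omega] at hn hγhand hΓhand
  have hplus : (Module.finrank ℂ (E absB) : ℝ) = (1 + sgnB * (-1) ^ m) / 2 := by
    rw [hE, hM, habsB, hsgnB]
    exact finrank_ker_sum_smul_kronecker_sub_sum_abs hn hγsa hγac hγhand hΓsa hΓac hΓhand hb
  have hminus : (Module.finrank ℂ (E (-absB)) : ℝ) = (1 - sgnB * (-1) ^ m) / 2 := by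
    rw [hE, hM, habsB, hsgnB]
    exact finrank_ker_sum_smul_kronecker_add_sum_abs hn hγsa hγac hγhand hΓsa hΓac hΓhand hb
  have hsgn : sgnB = 1 ∨ sgnB = -1 :=
    hsgnB ▸ Real.prod_sign_eq_one_or_eq_neg_one fun j _ => hb j
  have hχ : sgnB * (-1) ^ m = 1 ∨ sgnB * (-1) ^ m = -1 := by
    rcases hsgn with h | h <;> rcases neg_one_pow_eq_or ℝ m with h' | h' <;> simp [h, h']
  rw [mul_neg_one_pow_eq_one_iff hsgn]
  constructor
  · intro h
    rw [h] at hplus hminus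
    norm_num at hplus hminus
    exact ⟨hplus, hminus⟩
  · intro h
    rw [hχ.resolve_left h] at hplus hminus
    norm_num at hplus hminus
    exact ⟨hminus, hplus⟩
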